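/- Let G be a JCI-DMG satisfying JCI Assumptions 1, 2 and 3, let i be a context node (i ∈ K) and j a system node (j ∈ I). Then there exists no inducing walk in G between i and j that is into i. -/
import Mathlib


namespace CausalGraphs

variable {V : Type*}

/-- A directed mixed graph (DMG): directed edges `dir` (`i → j`) and
bidirected edges `bi` (`i ↔ j`), with no self-loops. -/
structure DMG (V : Type*) where
  dir : V → V → Prop
  bi : V → V → Prop
  dir_irrefl : ∀ i, ¬ dir i i
  bi_irrefl : ∀ i, ¬ bi i i

namespace DMG

/-- `G.Anc i j`: `i ∈ an(G, j)`, i.e. there is a (possibly trivial) directed path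
from `i` to `j` in `G`. -/
def Anc (G : DMG V) (i j : V) : Prop :=
  Relation.ReflTransGen G.dir i j

/-- `G.Scc i j`: `i ∈ scc(G, j)`, i.e. `i` and `j` lie in the same strongly
connected component of `G`. -/
def Scc (G : DMG V) (i j : V) : Prop :=
  G.Anc i j ∧ G.Anc j i

/-- There is a bidirected edge between `i` and `j` (bidirected edges are unordered). -/
def BiEdge (G : DMG V) (i j : V) : Prop :=
  G.bi i j ∨ G.bi j i

/-- `G` has no directed cycle (i.e. `G` is an ADMG). -/
def Acyclic (G : DMG V) : Prop :=
  ∀ i j, G.dir i j → ¬ G.Anc j i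

end DMG

/-- A walk of length `len` is recorded by its vertices `vert 0, …, vert len` and,
for each edge index `k < len`, the edge marks: `intoL k` (resp. `intoR k`) is `true`
iff the `k`-th edge has an arrowhead at `vert k` (resp. at `vert (k+1)`). -/
structure Walk (V : Type*) where
  len : ℕ
  vert : ℕ → V
  intoL : ℕ → Bool
  intoR : ℕ → Bool

namespace Walk

def first (w : Walk V) : V := w.vert 0

def last (w : Walk V) : V := w.vert w.len

/-- The walk is an actual walk in a DMG `G`: each step traverses a directed edge
(in either direction) or a bidirected edge of `G`, with the corresponding marks. -/
def ValidOn (G : DMG V) (w : Walk V) : Prop :=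
  ∀ k, k < w.len →
    (w.intoL k = false ∧ w.intoR k = true ∧ G.dir (w.vert k) (w.vert (k+1))) ∨
    (w.intoL k = true ∧ w.intoR k = false ∧ G.dir (w.vert (k+1)) (w.vert k)) ∨
    (w.intoL k = true ∧ w.intoR k = true ∧ G.BiEdge (w.vert k) (w.vert (k+1)))

/-- `k` is a non-endpoint position of the walk. -/
def Interior (w : Walk V) (k : ℕ) : Prop := 0 < k ∧ k < w.len

/-- The non-endpoint node `vert k` is a collider on the walk: both adjacent
edges have an arrowhead at it. -/
def ColliderAt (w : Walk V) (k : ℕ) : Prop :=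
  w.Interior k ∧ w.intoR (k-1) = true ∧ w.intoL k = true

/-- The non-endpoint node `vert k` is a non-collider on the walk. -/
def NonColliderAt (w : Walk V) (k : ℕ) : Prop :=
  w.Interior k ∧ ¬ (w.intoR (k-1) = true ∧ w.intoL k = true)

/-- The edge on the first-endpoint side of position `k` is directed out of
`vert k`, pointing to the neighbour `vert (k-1)` on the walk. -/
def PointsLeft (w : Walk V) (k : ℕ) : Prop :=
  w.intoL (k-1) = true ∧ w.intoR (k-1) = false

/-- The edge on the last-endpoint side of position `k` is directed out of
`vert k`, pointing to the neighbour `vert (k+1)` on the walk. -/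
def PointsRight (w : Walk V) (k : ℕ) : Prop :=
  w.intoL k = false ∧ w.intoR k = true

/-- The walk is a path: all its vertices are distinct. -/
def IsPath (w : Walk V) : Prop :=
  ∀ a, a ≤ w.len → ∀ b, b ≤ w.len → w.vert a = w.vert b → a = b

/-- The walk is into its first node (arrowhead at the first node). -/
def IntoFirst (w : Walk V) : Prop := 0 < w.len ∧ w.intoL 0 = true

/-- The walk is into its last node (arrowhead at the last node). -/
def IntoLast (w : Walk V) : Prop := 0 < w.len ∧ w.intoR (w.len - 1) = true

/-- The walk is σ-blocked by the set `C`. -/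
def SigmaBlocked (G : DMG V) (w : Walk V) (C : Set V) : Prop :=
  w.first ∈ C ∨ w.last ∈ C ∨
  (∃ k, w.ColliderAt k ∧ ¬ ∃ c ∈ C, G.Anc (w.vert k) c) ∨
  (∃ k, w.NonColliderAt k ∧ w.vert k ∈ C ∧
    ((w.PointsLeft k ∧ ¬ G.Scc (w.vert k) (w.vert (k-1))) ∨
     (w.PointsRight k ∧ ¬ G.Scc (w.vert k) (w.vert (k+1)))))

/-- The walk is d-blocked by the set `C`. -/
def DBlocked (G : DMG V) (w : Walk V) (C : Set V) : Prop :=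
  w.first ∈ C ∨ w.last ∈ C ∨
  (∃ k, w.ColliderAt k ∧ ¬ ∃ c ∈ C, G.Anc (w.vert k) c) ∨
  (∃ k, w.NonColliderAt k ∧ w.vert k ∈ C)

/-- The walk is inducing: every collider on it is an ancestor of one of the two
endpoints, and every non-endpoint non-collider only has outgoing directed edges
to its neighbours on the walk that lie in the same strongly connected component. -/
def Inducing (G : DMG V) (w : Walk V) : Prop :=
  (∀ k, w.ColliderAt k → G.Anc (w.vert k) w.first ∨ G.Anc (w.vert k) w.last) ∧
  (∀ k, w.NonColliderAt k →
    (w.PointsLeft k → G.Scc (w.vert k) (w.vert (k-1))) ∧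
    (w.PointsRight k → G.Scc (w.vert k) (w.vert (k+1))))

end Walk

namespace DMG

/-- `A` and `B` are σ-separated given `C` in `G`. -/
def SigmaSep (G : DMG V) (A B C : Set V) : Prop :=
  ∀ w : Walk V, w.ValidOn G → w.first ∈ A → w.last ∈ B → w.SigmaBlocked G C

/-- `A` and `B` are d-separated given `C` in `G`. -/
def DSep (G : DMG V) (A B C : Set V) : Prop :=
  ∀ w : Walk V, w.ValidOn G → w.first ∈ A → w.last ∈ B → w.DBlocked G C

/-- Nodes `i` and `j` are σ-connected given `C` in `G`. -/
def SigmaConnected (G : DMG V) (i j : V) (C : Set V) : Prop :=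
  ∃ w : Walk V, w.ValidOn G ∧ w.first = i ∧ w.last = j ∧ ¬ w.SigmaBlocked G C

/-- The σ-independence model of `G`. -/
def IMsigma (G : DMG V) : Set (Set V × Set V × Set V) :=
  { t | G.SigmaSep t.1 t.2.1 t.2.2 }

/-- The d-independence model of `G`. -/
def IMd (G : DMG V) : Set (Set V × Set V × Set V) :=
  { t | G.DSep t.1 t.2.1 t.2.2 }

/-- There is an inducing walk between `i` and `j` in `G`. -/
def InducingWalk (G : DMG V) (i j : V) : Prop :=
  ∃ w : Walk V, w.ValidOn G ∧ w.first = i ∧ w.last = j ∧ w.Inducing G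

/-- There is an inducing path between `i` and `j` in `G`. -/
def InducingPath (G : DMG V) (i j : V) : Prop :=
  ∃ w : Walk V, w.ValidOn G ∧ w.first = i ∧ w.last = j ∧ w.IsPath ∧ w.Inducing G

/-- There is an inducing walk between `i` and `j` in `G` that is into `j`. -/
def InducingWalkIntoLast (G : DMG V) (i j : V) : Prop :=
  ∃ w : Walk V, w.ValidOn G ∧ w.first = i ∧ w.last = j ∧ w.Inducing G ∧ w.IntoLast

/-- There is an inducing walk between `i` and `j` in `G` that is into both `i` and `j`. -/
def InducingWalkIntoBoth (G : DMG V) (i j : V) : Prop :=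
  ∃ w : Walk V, w.ValidOn G ∧ w.first = i ∧ w.last = j ∧ w.Inducing G ∧ w.IntoFirst ∧ w.IntoLast

/-- `G'` is an acyclification of `G`. -/
def IsAcyclification (G G' : DMG V) : Prop :=
  G'.Acyclic ∧
  (∀ i j, ¬ G.Scc i j →
    ((G'.dir i j ↔ ∃ k, G.Scc k j ∧ G.dir i k) ∧
     (G'.bi i j ↔ ∃ k, G.Scc k j ∧ G.bi i k))) ∧
  (∀ i j, i ≠ j → G.Scc i j → (G'.dir i j ∨ G'.dir j i ∨ G'.bi i j))

end DMG

/-- Edge marks of a partial ancestral graph. -/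
inductive Mark : Type
  | tail
  | arrow
  | circle
deriving DecidableEq

/-- A directed partial ancestral graph (DPAG). `mark i j` is the edge mark at `j`
on the edge between `i` and `j` (only meaningful when `adj i j`). Allowed edge
types are `→`, `←`, `↔`, `∘→`, `←∘` and `∘—∘`; there are no directed and no
almost directed cycles. -/
structure DPAG (V : Type*) where
  adj : V → V → Prop
  mark : V → V → Mark
  adj_symm : ∀ i j, adj i j → adj j i
  adj_irrefl : ∀ i, ¬ adj i i
  tail_imp_arrow : ∀ i j, adj i j → mark j i = Mark.tail → mark i j = Mark.arrow
  no_directed_cycle : ∀ i, ¬ Relation.TransGen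
    (fun a b => adj a b ∧ mark a b = Mark.arrow ∧ mark b a = Mark.tail) i i
  no_almost_directed_cycle : ∀ i j, Relation.ReflTransGen
    (fun a b => adj a b ∧ mark a b = Mark.arrow ∧ mark b a = Mark.tail) i j →
    ¬ (adj i j ∧ mark i j = Mark.arrow ∧ mark j i = Mark.arrow)

/-- A directed edge `i → j` with respect to raw adjacency/mark data. -/
def DirEdgeOn (adj : V → V → Prop) (mark : V → V → Mark) (i j : V) : Prop :=
  adj i j ∧ mark i j = Mark.arrow ∧ mark j i = Mark.tail

/-- The directed edge `i → j` is definitely visible, with respect to raw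
adjacency/mark data: there is a node `k` not adjacent to `j` such that either
the edge between `k` and `i` is into `i`, or there is a path between `k` and `i`
that is into `i` on which every non-endpoint node is a collider and a parent of `j`. -/
def DefinitelyVisibleOn (adj : V → V → Prop) (mark : V → V → Mark) (i j : V) : Prop :=
  DirEdgeOn adj mark i j ∧
  ∃ k, ¬ adj k j ∧
    ((adj k i ∧ mark k i = Mark.arrow) ∨
     (∃ n, ∃ p : ℕ → V, 0 < n ∧ p 0 = k ∧ p n = i ∧
       (∀ a, a ≤ n → ∀ b, b ≤ n → p a = p b → a = b) ∧
       (∀ m, m < n → adj (p m) (p (m+1))) ∧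
       mark (p (n-1)) i = Mark.arrow ∧
       (∀ m, 0 < m → m < n →
         (mark (p (m-1)) (p m) = Mark.arrow ∧ mark (p (m+1)) (p m) = Mark.arrow) ∧
         DirEdgeOn adj mark (p m) j)))

namespace DPAG

/-- `i → j` in `P`. -/
def DirEdge (P : DPAG V) (i j : V) : Prop := DirEdgeOn P.adj P.mark i j

/-- `i ↔ j` in `P`. -/
def BiEdge (P : DPAG V) (i j : V) : Prop :=
  P.adj i j ∧ P.mark i j = Mark.arrow ∧ P.mark j i = Mark.arrow

/-- `i *→ j` in `P`: an edge between `i` and `j` with an arrowhead at `j`. -/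
def ArrowAt (P : DPAG V) (i j : V) : Prop := P.adj i j ∧ P.mark i j = Mark.arrow

/-- The directed edge `i → j` of `P` is definitely visible in `P`. -/
def DefinitelyVisible (P : DPAG V) (i j : V) : Prop :=
  DefinitelyVisibleOn P.adj P.mark i j

/-- The DPAG `P` contains the DMG `G`. -/
def Contains (P : DPAG V) (G : DMG V) : Prop :=
  (∀ i j, i ≠ j → (P.adj i j ↔ G.InducingPath i j)) ∧
  (∀ i j, P.ArrowAt i j → ¬ G.Anc j i) ∧
  (∀ i j, P.DirEdge i j → G.Anc i j)

/-- `p 0, …, p n` is a possibly directed path in `P`: consecutive vertices are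
adjacent, no edge has an arrowhead at the endpoint nearer `p 0`, and all
vertices are distinct. -/
def PossiblyDirectedPathOn (P : DPAG V) (n : ℕ) (p : ℕ → V) : Prop :=
  (∀ k, k < n → P.adj (p k) (p (k+1)) ∧ P.mark (p (k+1)) (p k) ≠ Mark.arrow) ∧
  (∀ a, a ≤ n → ∀ b, b ≤ n → p a = p b → a = b)

/-- The path `p 0, …, p n` is uncovered: every consecutive triple is unshielded. -/
def UncoveredOn (P : DPAG V) (n : ℕ) (p : ℕ → V) : Prop :=
  ∀ k, k + 2 ≤ n → ¬ P.adj (p k) (p (k+2))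

/-- There is a possibly directed path from `i` to `j` in `P`. -/
def PDPath (P : DPAG V) (i j : V) : Prop :=
  ∃ n, ∃ p : ℕ → V, p 0 = i ∧ p n = j ∧ P.PossiblyDirectedPathOn n p

end DPAG

/-- JCI Assumption 1 (exogeneity): no system variable causes any context variable
(`K` is the set of context nodes; its complement is the set of system nodes). -/
def JCI1 (G : DMG V) (K : Set V) : Prop :=
  ∀ i k, i ∉ K → k ∈ K → ¬ G.dir i k

/-- JCI Assumption 2 (randomization): no pair of a system and a context variable
is confounded. -/
def JCI2 (G : DMG V) (K : Set V) : Prop :=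
  ∀ i k, i ∉ K → k ∈ K → ¬ G.BiEdge i k

/-- JCI Assumption 3 (genericity): every pair of distinct context variables is
connected by a bidirected edge and by no directed edge. -/
def JCI3 (G : DMG V) (K : Set V) : Prop :=
  ∀ k k', k ∈ K → k' ∈ K → k ≠ k' → (G.bi k k' ∧ ¬ G.dir k k')

/-- An independence model on `V`: a set of triples of subsets of `V`. -/
abbrev IndepModel (V : Type*) := Set (Set V × Set V × Set V)

/-- Background knowledge `Ψ` is compatible with the acyclification. -/
def CompatibleWithAcyclification (Ψ : DMG V → Prop) : Prop :=
  ∀ G : DMG V, Ψ G →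
    (∃ G', G.IsAcyclification G' ∧ Ψ G') ∧
    (∀ i j : V, G.Anc i j → ∃ G', G.IsAcyclification G' ∧ Ψ G' ∧ G'.Anc i j) ∧
    (∀ i j : V, ¬ G.Anc i j → ∀ G', G.IsAcyclification G' → Ψ G' → ¬ G'.Anc i j)

/-- in a JCI-DMG satisfying JCI Assumptions 1, 2 and 3 (with
context nodes `K`), there is no inducing walk between a context node `i` and a
system node `j` that is into `i`. -/
theorem statement19 (G : DMG V) (K : Set V)
    (h1 : JCI1 G K) (h2 : JCI2 G K) (h3 : JCI3 G K)
    (i j : V) (hi : i ∈ K) (hj : j ∉ K) :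
    ¬ ∃ w : Walk V, w.ValidOn G ∧ w.first = i ∧ w.last = j ∧
      w.Inducing G ∧ w.IntoFirst := by
  classical
  rintro ⟨w, hval, hfirst, hlast, hind, hintof⟩
  obtain ⟨hcolA, hncA⟩ := hind
  obtain ⟨hlenpos, hL0⟩ := hintof
  -- no directed edge into a context node at all
  have hnodir : ∀ x k, k ∈ K → ¬ G.dir x k := by
    intro x k hk hd
    by_cases hx : x ∈ K
    · rcases eq_or_ne x k with rfl | hne
      · exact G.dir_irrefl _ hd
      · exact (h3 x k hx hk hne).2 hd
    · exact h1 x k hx hk hd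
  -- hence a context node has no proper ancestors
  have hanc : ∀ x k, k ∈ K → G.Anc x k → x = k := by
    intro x k hk h
    cases h with
    | refl => rfl
    | tail h' hd => exact absurd hd (hnodir _ _ hk)
  have hlastK : w.vert w.len ∉ K := by
    have hl : w.last = j := hlast
    rw [Walk.last] at hl
    rw [hl]; exact hj
  have h0K : w.vert 0 ∈ K := by
    have hf : w.first = i := hfirst
    rw [Walk.first] at hf
    rw [hf]; exact hi
  have hex : ∃ m, w.vert m ∉ K := ⟨w.len, hlastK⟩
  set m := Nat.find hex with hm
  have hmspec : w.vert m ∉ K := Nat.find_spec hex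
  have hmle : m ≤ w.len := Nat.find_le hlastK
  have hm0 : 0 < m := by
    rcases Nat.eq_zero_or_pos m with h0 | h
    · rw [h0] at hmspec; exact absurd h0K hmspec
    · exact h
  have hmin : ∀ k, k < m → w.vert k ∈ K := by
    intro k hk
    exact not_not.mp (Nat.find_min hex hk)
  have hstep := hval (m - 1) (by omega)
  have hmm : m - 1 + 1 = m := by omega
  rw [hmm] at hstep
  have hprevK : w.vert (m - 1) ∈ K := hmin _ (by omega)
  rcases hstep with ⟨hL, hR, hd⟩ | ⟨hL, hR, hd⟩ | ⟨hL, hR, hb⟩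
  · -- directed edge vert (m-1) → vert m
    rcases Nat.lt_or_ge m 2 with h2' | h2'
    · -- m = 1 : contradicts IntoFirst
      have hm1 : m = 1 := by omega
      rw [hm1] at hL
      norm_num at hL
      rw [hL0] at hL
      exact Bool.noConfusion hL
    · -- m ≥ 2 : vert (m-1) is a right-pointing non-collider
      have hstep2 := hval (m - 2) (by omega)
      have hmm2 : m - 2 + 1 = m - 1 := by omega
      rw [hmm2] at hstep2
      have hprev2K : w.vert (m - 2) ∈ K := hmin _ (by omega)
      have hncc : w.NonColliderAt (m - 1) := by
        refine ⟨⟨by omega, by omega⟩, ?_⟩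
        intro h
        rw [hL] at h
        exact Bool.noConfusion h.2
      have hpr : w.PointsRight (m - 1) := ⟨hL, hR⟩
      have hscc := (hncA (m - 1) hncc).2 hpr
      rw [hmm] at hscc
      have heq := hanc _ _ hprevK hscc.2
      rw [heq] at hmspec
      exact hmspec hprevK
  · -- directed edge vert m → vert (m-1): into a context node, impossible
    exact absurd hd (hnodir _ _ hprevK)
  · -- bidirected edge between system and context node, impossible
    exact h2 (w.vert m) (w.vert (m - 1)) hmspec hprevK (Or.symm hb)

end CausalGraphs
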